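/- Let G be a finite graph in which every ball of radius n contains at most one cycle (n ≤ ℓ_G). Then for any two vertices x, y with d_G(x,y) = k ≤ n, there are at most two non-backtracking paths of length k from x to y. -/

import Mathlib

/-!
Geodesics from `x` to `y` stay in the ball `B` of radius `n` around `x`. Two distinct ones close
up a cycle in `B`; as all cycles in `B` have the same edge set, any edge `e` of that cycle lies on
every cycle in `B`. Two paths in `B` avoiding `e` coincide, for otherwise they would close up a
cycle in `B` missing `e`. Two geodesics through `e` cross it in the same direction (away from `x`),
and their pieces before and after `e` avoid `e`, so they coincide as well. Of three geodesics, two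
agree on whether they use `e`.
-/

open SimpleGraph Walk

namespace SimpleGraph

variable {V : Type*} {G : SimpleGraph V}

def LiesOnEveryCycleIn (G : SimpleGraph V) (e : Sym2 V) (B : Set V) : Prop :=
  ∀ ⦃w : V⦄ (c : G.Walk w w), c.IsCycle → (∀ v ∈ c.support, v ∈ B) → e ∈ c.edges

namespace Walk

lemma reachable_and_dist_le_length_of_mem_support {x y v : V} (p : G.Walk x y)
    (hv : v ∈ p.support) : G.Reachable x v ∧ G.dist x v ≤ p.length := by
  obtain ⟨q, r, rfl⟩ := p.mem_support_iff_exists_append.mp hv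
  exact ⟨q.reachable, (dist_le q).trans (by simp)⟩

theorem IsPath.exists_isCycle_subset_of_ne {u v : V} {p q : G.Walk u v} (hp : p.IsPath)
    (hq : q.IsPath) (hne : p ≠ q) :
    ∃ (w : V) (c : G.Walk w w), c.IsCycle ∧
      c.edges ⊆ p.edges ++ q.edges ∧ c.support ⊆ p.support ++ q.support := by
  obtain ⟨_, _, p', q', hp', hq', hc⟩ := hp.exists_isCycle_of_ne hq hne
  refine ⟨_, _, hc, fun e he => ?_, fun v hv => ?_⟩
  · simp only [edges_append, edges_reverse, List.mem_append, List.mem_reverse] at he ⊢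
    exact he.imp (hp'.edges_subset ·) (hq'.edges_subset ·)
  · simp only [mem_support_append_iff, support_reverse, List.mem_append, List.mem_reverse]
      at hv ⊢
    exact hv.imp (hp'.support_subset ·) (hq'.support_subset ·)

lemma exists_eq_append_cons_of_mem_darts_of_length_eq_dist {x y : V} {p : G.Walk x y}
    (hp : p.length = G.dist x y) {d : G.Dart} (hd : d ∈ p.darts) :
    ∃ (r : G.Walk x d.fst) (s : G.Walk d.snd y), p = r.append (cons d.adj s) ∧
      G.dist x d.fst = r.length ∧ G.dist x d.snd = r.length + 1 := by
  obtain ⟨r, s, h⟩ := (isSubwalk_toWalk_adj_iff_mem_darts p).2 hd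
  have hsplit : p = r.append (cons d.adj s) := by
    rwa [← append_assoc, Adj.toWalk, cons_append, nil_append] at h
  refine ⟨r, s, hsplit, ?_, ?_⟩
  · exact (length_eq_dist_of_subwalk hp (isSubwalk_of_append_left hsplit)).symm
  · rw [← concat_append] at hsplit
    simpa using (length_eq_dist_of_subwalk hp (isSubwalk_of_append_left hsplit)).symm

lemma IsPath.notMem_edges_of_append_cons {u v a b : V} {r : G.Walk u a} {h : G.Adj a b}
    {s : G.Walk b v} (hp : (r.append (cons h s)).IsPath) :
    s(a, b) ∉ r.edges ∧ s(a, b) ∉ s.edges := by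
  have := hp.edges_nodup
  simp only [edges_append, edges_cons, List.nodup_append, List.nodup_cons] at this
  exact ⟨fun he => this.2.2 _ he _ List.mem_cons_self rfl, this.2.1.1⟩

variable {B : Set V} {e : Sym2 V}

lemma IsPath.eq_of_notMem_edges (hcyc : G.LiesOnEveryCycleIn e B) {u v : V} {p q : G.Walk u v}
    (hp : p.IsPath) (hq : q.IsPath)
    (hpB : ∀ v ∈ p.support, v ∈ B) (hqB : ∀ v ∈ q.support, v ∈ B)
    (hpe : e ∉ p.edges) (hqe : e ∉ q.edges) : p = q := by
  by_contra hne
  obtain ⟨_, c, hc, hce, hcs⟩ := hp.exists_isCycle_subset_of_ne hq hne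
  have hcB : ∀ v ∈ c.support, v ∈ B := fun v hv =>
    (List.mem_append.mp (hcs hv)).elim (hpB v) (hqB v)
  exact (List.mem_append.mp (hce (hcyc c hc hcB))).elim hpe hqe

lemma eq_of_length_eq_dist_of_mem_edges (hcyc : G.LiesOnEveryCycleIn e B) {x y : V}
    {p q : G.Walk x y} (hp : p.length = G.dist x y) (hq : q.length = G.dist x y)
    (hpB : ∀ v ∈ p.support, v ∈ B) (hqB : ∀ v ∈ q.support, v ∈ B)
    (hpe : e ∈ p.edges) (hqe : e ∈ q.edges) : p = q := by
  obtain ⟨d, hd, rfl⟩ := List.mem_map.mp hpe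
  obtain ⟨d', hd', hdd'⟩ := List.mem_map.mp hqe
  obtain ⟨r, s, rfl, hr, hs⟩ := exists_eq_append_cons_of_mem_darts_of_length_eq_dist hp hd
  obtain ⟨r', s', rfl, hr', hs'⟩ := exists_eq_append_cons_of_mem_darts_of_length_eq_dist hq hd'
  obtain rfl : d' = d := by
    rcases (dart_edge_eq_iff d' d).mp hdd' with h | rfl
    · exact h
    · simp only [Dart.symm_toProd, Prod.fst_swap, Prod.snd_swap] at hr' hs'
      omega
  have hP := isPath_of_length_eq_dist _ hp
  have hP' := isPath_of_length_eq_dist _ hq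
  obtain ⟨hre, hse⟩ := hP.notMem_edges_of_append_cons
  obtain ⟨hre', hse'⟩ := hP'.notMem_edges_of_append_cons
  congr 1
  · exact hP.of_append_left.eq_of_notMem_edges hcyc hP'.of_append_left
      (fun v hv => hpB v (by simp [hv])) (fun v hv => hqB v (by simp [hv])) hre hre'
  · congr 1
    exact hP.of_append_right.of_cons.eq_of_notMem_edges hcyc hP'.of_append_right.of_cons
        (fun v hv => hpB v (by simp [hv])) (fun v hv => hqB v (by simp [hv])) hse hse'

lemma eq_of_length_eq_dist_of_mem_edges_iff (hcyc : G.LiesOnEveryCycleIn e B) {x y : V}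
    {p q : G.Walk x y} (hp : p.length = G.dist x y) (hq : q.length = G.dist x y)
    (hpB : ∀ v ∈ p.support, v ∈ B) (hqB : ∀ v ∈ q.support, v ∈ B)
    (hpq : e ∈ p.edges ↔ e ∈ q.edges) : p = q := by
  by_cases hpe : e ∈ p.edges
  · exact eq_of_length_eq_dist_of_mem_edges hcyc hp hq hpB hqB hpe (hpq.mp hpe)
  · exact (isPath_of_length_eq_dist _ hp).eq_of_notMem_edges hcyc (isPath_of_length_eq_dist _ hq)
      hpB hqB hpe (hpq.not.mp hpe)

end Walk

end SimpleGraph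

theorem nonbacktracking_paths_le_two_general {V : Type*} [DecidableEq V]
    (G : SimpleGraph V) (n k : ℕ) (hkn : k ≤ n)
    (honecycle : ∀ (u a b : V) (c : G.Walk a a) (c' : G.Walk b b),
      c.IsCycle → c'.IsCycle →
      (∀ v ∈ c.support, G.Reachable u v ∧ G.dist u v ≤ n) →
      (∀ v ∈ c'.support, G.Reachable u v ∧ G.dist u v ≤ n) →
      c.edges.toFinset = c'.edges.toFinset)
    (x y : V) (hdist : G.dist x y = k)
    (p₁ p₂ p₃ : G.Walk x y)
    (h₁ : p₁.length = k) (h₂ : p₂.length = k) (h₃ : p₃.length = k) :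
    p₁ = p₂ ∨ p₁ = p₃ ∨ p₂ = p₃ := by
  subst hdist
  set B : Set V := {v | G.Reachable x v ∧ G.dist x v ≤ n}
  have hB (p : G.Walk x y) (hp : p.length = G.dist x y) : ∀ v ∈ p.support, v ∈ B :=
    fun v hv => (p.reachable_and_dist_le_length_of_mem_support hv).imp_right (by omega)
  rcases eq_or_ne p₁ p₂ with h₁₂ | h₁₂
  · exact Or.inl h₁₂
  obtain ⟨_, C, hC, -, hCs⟩ := (isPath_of_length_eq_dist _ h₁).exists_isCycle_subset_of_ne
    (isPath_of_length_eq_dist _ h₂) h₁₂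
  have hCB : ∀ v ∈ C.support, v ∈ B := fun v hv =>
    (List.mem_append.mp (hCs hv)).elim (hB p₁ h₁ v) (hB p₂ h₂ v)
  obtain ⟨e, he⟩ := List.exists_mem_of_ne_nil C.edges (edges_eq_nil.not.mpr hC.not_nil)
  have hcyc : G.LiesOnEveryCycleIn e B := fun _ c hc hcB =>
    List.mem_toFinset.mp <| honecycle x _ _ C c hC hc hCB hcB ▸ List.mem_toFinset.mpr he
  have key (p q : G.Walk x y) (hp : p.length = G.dist x y) (hq : q.length = G.dist x y) :
      (e ∈ p.edges ↔ e ∈ q.edges) → p = q :=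
    eq_of_length_eq_dist_of_mem_edges_iff hcyc hp hq (hB p hp) (hB q hq)
  have := key p₁ p₂ h₁ h₂
  have := key p₁ p₃ h₁ h₃
  have := key p₂ p₃ h₂ h₃
  tauto

/-- If every ball of radius `n` in `G` contains at most one cycle, then between
any two vertices at distance `k ≤ n` there are at most two non-backtracking
walks of length `k`. -/
theorem nonbacktracking_paths_le_two {V : Type*} [DecidableEq V]
    (G : SimpleGraph V) (n k : ℕ) (hkn : k ≤ n)
    (honecycle : ∀ (u a b : V) (c : G.Walk a a) (c' : G.Walk b b),
      c.IsCycle → c'.IsCycle →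
      (∀ v ∈ c.support, G.Reachable u v ∧ G.dist u v ≤ n) →
      (∀ v ∈ c'.support, G.Reachable u v ∧ G.dist u v ≤ n) →
      c.edges.toFinset = c'.edges.toFinset)
    (x y : V) (hreach : G.Reachable x y) (hdist : G.dist x y = k)
    (p₁ p₂ p₃ : G.Walk x y)
    (h₁ : p₁.length = k) (h₂ : p₂.length = k) (h₃ : p₃.length = k)
    (nb₁ : p₁.darts.Chain' fun d d' => d' ≠ d.symm)
    (nb₂ : p₂.darts.Chain' fun d d' => d' ≠ d.symm)
    (nb₃ : p₃.darts.Chain' fun d d' => d' ≠ d.symm) :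
    p₁ = p₂ ∨ p₁ = p₃ ∨ p₂ = p₃ :=
  nonbacktracking_paths_le_two_general G n k hkn honecycle x y hdist p₁ p₂ p₃ h₁ h₂ h₃
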